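/- Define L(b,d) := (b³ + 2b²d + bd² + b² + 4bd + 2d²)/(b²d + 3bd² + b² + 4bd + 2d²) for (b,d) ∈ P, i.e. 0 < b < d. Then L(b,d) > 1/3 for every (b,d) ∈ P, and the infimum of L over P equals 1/3. -/
import Mathlib


noncomputable def Lfun (b d : ℝ) : ℝ :=
  (b^3 + 2*b^2*d + b*d^2 + b^2 + 4*b*d + 2*d^2) /
    (b^2*d + 3*b*d^2 + b^2 + 4*b*d + 2*d^2)

lemma Lfun_denom_pos (b d : ℝ) (hb : 0 < b) (hd : 0 < d) :
    0 < b^2*d + 3*b*d^2 + b^2 + 4*b*d + 2*d^2 := by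
  nlinarith [mul_pos hb hd, mul_pos (mul_pos hb hb) hd, mul_pos (mul_pos hb hd) hd,
    mul_pos hb hb, mul_pos hd hd]

lemma Lfun_gt (b d : ℝ) (hb : 0 < b) (hbd : b < d) : 1/3 < Lfun b d := by
  have hd : 0 < d := hb.trans hbd
  have hD := Lfun_denom_pos b d hb hd
  rw [Lfun, div_lt_div_iff₀ (by norm_num) hD]
  nlinarith [mul_pos hb hd, mul_pos (mul_pos hb hb) hd, mul_pos (mul_pos hb hd) hd,
    mul_pos hb hb, mul_pos hd hd, mul_pos (mul_pos hb hb) hb]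

/-- `L(b,d) > 1/3` on `P = {0 < b < d}`, and the infimum of `L` over `P` is `1/3`. -/
theorem Lfun_gt_third_and_infimum :
    (∀ b d : ℝ, 0 < b → b < d → 1/3 < Lfun b d) ∧
    IsGLB {y : ℝ | ∃ b d : ℝ, 0 < b ∧ b < d ∧ y = Lfun b d} (1/3) := by
  refine ⟨fun b d hb hbd => Lfun_gt b d hb hbd, ?_, ?_⟩
  · rintro y ⟨b, d, hb, hbd, rfl⟩
    exact (Lfun_gt b d hb hbd).le
  · intro c hc
    by_contra hlt
    push_neg at hlt
    obtain ⟨ε, hε, hεc⟩ : ∃ ε : ℝ, 0 < ε ∧ c = 1/3 + ε :=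
      ⟨c - 1/3, by linarith, by ring⟩
    obtain ⟨b, hb1, hbε⟩ : ∃ b : ℝ, 1 < b ∧ b * ε = ε + 4 := by
      refine ⟨1 + 4/ε, by nlinarith [div_pos (by norm_num : (0:ℝ) < 4) hε], ?_⟩
      field_simp
    have hb0 : 0 < b := by linarith
    have hbd : b < b^2 := by nlinarith
    have hD := Lfun_denom_pos b (b^2) hb0 (by positivity)
    have key : Lfun b (b^2) ≤ (b + 9) / (3*b) := by
      rw [Lfun, div_le_div_iff₀ hD (by positivity)]
      nlinarith [pow_pos hb0 2, pow_pos hb0 3, pow_pos hb0 4, pow_pos hb0 5]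
    have key2 : (b + 9) / (3*b) < c := by
      rw [div_lt_iff₀ (by positivity), hεc]
      nlinarith
    have := hc ⟨b, b^2, hb0, hbd, rfl⟩
    linarith
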